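/- arXiv:2112.00732 — 3 statements merged into one kernel-verified Lean document; each statement's English description precedes it below -/
import Mathlib

section
/- Let {Z_k}_{k≥1} be an iid sequence of nonnegative real-valued random variables with E[Z_1^2] < ∞. Then there exists a constant C > 0 such that for every δ ∈ (0,1], limsup_{N→∞} (1/N) · E[ max_{1≤k≤N} Σ_{ℓ=k}^{k+⌊δN⌋} Z_ℓ ] ≤ C·δ. (In other words, as δ → 0 the limsup is O(δ).) -/
open MeasureTheory ProbabilityTheory Filter Finset

/-!
Cut `ℕ` into blocks of length `L = ⌊δN⌋ + 1`. Every window `[k, k + ⌊δN⌋]` with `k ≤ N` lies in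
two consecutive blocks among the first `N / L + 2`, so the maximal window sum is at most twice the
largest block sum `B_j`. With `μ`, `V` the mean and variance of `Z₁`, each `B_j` has mean `Lμ` and
variance `LV`, and for every `t > 0`, `B_j - Lμ ≤ (t + Q / t) / 2` with `Q = ∑_j (B_j - Lμ)²`,
whose expectation is `(N / L + 2) L V = O(N)`. Taking `t = √N` gives
`E[max] ≤ 2Lμ + O(√N) ≤ 2δNμ + O(√N)`.
-/

def blockSum (z : ℕ → ℝ) (L j : ℕ) : ℝ :=
  ∑ ℓ ∈ Ico (j * L) ((j + 1) * L), z ℓ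

lemma blockSum_nonneg {z : ℕ → ℝ} (hz : ∀ ℓ, 0 ≤ z ℓ) (L j : ℕ) : 0 ≤ blockSum z L j :=
  sum_nonneg fun ℓ _ => hz ℓ

lemma sum_Icc_le_blockSum_add_blockSum {z : ℕ → ℝ} (hz : ∀ ℓ, 0 ≤ z ℓ) (k m : ℕ) :
    ∑ ℓ ∈ Icc k (k + m), z ℓ ≤
      blockSum z (m + 1) (k / (m + 1)) + blockSum z (m + 1) (k / (m + 1) + 1) := by
  set L := m + 1
  set j := k / L
  have hjk : j * L ≤ k := Nat.div_mul_le_self k L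
  have hkj : k < j * L + L := Nat.lt_div_mul_add (Nat.succ_pos m)
  have hsub : Icc k (k + m) ⊆ Ico (j * L) ((j + 2) * L) := by
    intro ℓ hℓ
    rw [mem_Icc] at hℓ
    have : (j + 2) * L = j * L + L + L := by ring
    rw [mem_Ico]
    omega
  calc ∑ ℓ ∈ Icc k (k + m), z ℓ ≤ ∑ ℓ ∈ Ico (j * L) ((j + 2) * L), z ℓ :=
        sum_le_sum_of_subset_of_nonneg hsub fun ℓ _ _ => hz ℓ
    _ = blockSum z L j + blockSum z L (j + 1) :=
        (sum_Ico_consecutive z (Nat.mul_le_mul_right L (by omega))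
          (Nat.mul_le_mul_right L (by omega))).symm

lemma two_mul_le_add_sq_div (x : ℝ) {t : ℝ} (ht : 0 < t) : 2 * x ≤ t + x ^ 2 / t := by
  have : t + x ^ 2 / t - 2 * x = (x - t) ^ 2 / t := by field_simp; ring
  linarith [div_nonneg (sq_nonneg (x - t)) ht.le]

/-- A square-root-free form of `x i - c ≤ √(∑ j ∈ s, (x j - c) ^ 2)`. -/
lemma two_mul_le_of_mem_sum_sq_sub {ι : Type*} {s : Finset ι} {i : ι} (hi : i ∈ s) (x : ι → ℝ)
    (c : ℝ) {t : ℝ} (ht : 0 < t) :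
    2 * x i ≤ 2 * c + t + (∑ j ∈ s, (x j - c) ^ 2) / t := by
  have hQ : (x i - c) ^ 2 ≤ ∑ j ∈ s, (x j - c) ^ 2 :=
    single_le_sum (f := fun j => (x j - c) ^ 2) (fun j _ => sq_nonneg _) hi
  linarith [two_mul_le_add_sq_div (x i - c) ht, div_le_div_of_nonneg_right hQ ht.le]

lemma iSup_window_sum_nonneg {z : ℕ → ℝ} (hz : ∀ ℓ, 0 ≤ z ℓ) (N m : ℕ) :
    0 ≤ ⨆ k ∈ Icc 1 N, ∑ ℓ ∈ Icc k (k + m), z ℓ :=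
  Real.iSup_nonneg fun _ => Real.iSup_nonneg fun _ => sum_nonneg fun ℓ _ => hz ℓ

lemma iSup_window_sum_le {z : ℕ → ℝ} (hz : ∀ ℓ, 0 ≤ z ℓ) (N m : ℕ) (c : ℝ) {t : ℝ}
    (ht : 0 < t) :
    ⨆ k ∈ Icc 1 N, ∑ ℓ ∈ Icc k (k + m), z ℓ ≤
      2 * c + t + (∑ j ∈ range (N / (m + 1) + 2), (blockSum z (m + 1) j - c) ^ 2) / t := by
  set R := 2 * c + t + (∑ j ∈ range (N / (m + 1) + 2), (blockSum z (m + 1) j - c) ^ 2) / t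
  have hblock : ∀ j < N / (m + 1) + 2, 2 * blockSum z (m + 1) j ≤ R := fun j hj =>
    two_mul_le_of_mem_sum_sq_sub (mem_range.mpr hj) _ c ht
  have hR : 0 ≤ R := by linarith [hblock 0 (by simp), blockSum_nonneg hz (m + 1) 0]
  refine Real.iSup_le (fun k => Real.iSup_le (fun hk => ?_) hR) hR
  have hj : k / (m + 1) ≤ N / (m + 1) := Nat.div_le_div_right (mem_Icc.mp hk).2
  linarith [sum_Icc_le_blockSum_add_blockSum hz k m, hblock (k / (m + 1)) (by omega),
    hblock (k / (m + 1) + 1) (by omega)]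

section Probability

variable {Ω : Type*} [MeasurableSpace Ω] {P : Measure Ω}

lemma integral_sq_sum_sub_eq_card_mul_variance [IsFiniteMeasure P] {ι : Type*}
    {Z : ι → Ω → ℝ} {X : Ω → ℝ} (hindep : iIndepFun Z P)
    (hident : ∀ i, IdentDistrib (Z i) X P P) (hX : MemLp X 2 P) (s : Finset ι) :
    ∫ ω, (∑ i ∈ s, Z i ω - #s * P[X]) ^ 2 ∂P = #s * Var[X; P] := by
  have hZ : ∀ i, MemLp (Z i) 2 P := fun i => (hident i).symm.memLp_snd hX
  have hmean : ∫ ω, ∑ i ∈ s, Z i ω ∂P = #s * P[X] := by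
    rw [integral_finsetSum _ fun i _ => (hZ i).integrable one_le_two]
    simp [(hident _).integral_eq]
  have hvar : Var[∑ i ∈ s, Z i; P] = #s * Var[X; P] := by
    rw [IndepFun.variance_sum (fun i _ => hZ i) fun i _ j _ hij => hindep.indepFun hij]
    simp [(hident _).variance_eq]
  rw [← hvar, variance_eq_integral (memLp_finsetSum' s fun i _ => hZ i).aemeasurable]
  simp only [Finset.sum_apply, hmean]

lemma integral_iSup_window_sum_le [IsProbabilityMeasure P] {Z : ℕ → Ω → ℝ} {X : Ω → ℝ}
    (hindep : iIndepFun Z P) (hident : ∀ ℓ, IdentDistrib (Z ℓ) X P P) (hX : MemLp X 2 P)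
    (hnonneg : ∀ ℓ ω, 0 ≤ Z ℓ ω) (N m : ℕ) {t : ℝ} (ht : 0 < t) :
    ∫ ω, (⨆ k ∈ Icc 1 N, ∑ ℓ ∈ Icc k (k + m), Z ℓ ω) ∂P ≤
      2 * ((m + 1) * P[X]) + t + (N / (m + 1) + 2 : ℕ) * (m + 1) * Var[X; P] / t := by
  set c : ℝ := (m + 1) * P[X]
  set dev : ℕ → Ω → ℝ := fun j ω => (blockSum (Z · ω) (m + 1) j - c) ^ 2
  have hblock : ∀ j, MemLp (fun ω => blockSum (Z · ω) (m + 1) j) 2 P := fun j =>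
    memLp_finsetSum _ fun ℓ _ => (hident ℓ).symm.memLp_snd hX
  have hdev_int : ∀ j, Integrable (dev j) P := fun j => by
    simpa [dev] using ((hblock j).sub (memLp_const c)).integrable_sq
  have hdev : ∀ j, ∫ ω, dev j ω ∂P = (m + 1) * Var[X; P] := fun j => by
    have h := integral_sq_sum_sub_eq_card_mul_variance hindep hident hX
      (Ico (j * (m + 1)) ((j + 1) * (m + 1)))
    have hcard : #(Ico (j * (m + 1)) ((j + 1) * (m + 1))) = m + 1 := by
      simp [Nat.card_Ico, add_mul]
    rw [hcard] at h
    push_cast at h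
    exact h
  calc ∫ ω, (⨆ k ∈ Icc 1 N, ∑ ℓ ∈ Icc k (k + m), Z ℓ ω) ∂P
      ≤ ∫ ω, 2 * c + t + (∑ j ∈ range (N / (m + 1) + 2), dev j ω) / t ∂P :=
        integral_mono_of_nonneg (ae_of_all _ fun ω => iSup_window_sum_nonneg (hnonneg · ω) N m)
          ((integrable_const _).add ((integrable_finsetSum _ fun j _ => hdev_int j).div_const t))
          (ae_of_all _ fun ω => iSup_window_sum_le (hnonneg · ω) N m c ht)
    _ = 2 * c + t + (N / (m + 1) + 2 : ℕ) * (m + 1) * Var[X; P] / t := by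
        rw [integral_add (integrable_const _)
            ((integrable_finsetSum _ fun j _ => hdev_int j).div_const t),
          integral_const, integral_div, integral_finsetSum _ fun j _ => hdev_int j]
        simp [hdev, mul_assoc]

lemma inv_mul_integral_iSup_window_sum_le [IsProbabilityMeasure P] {Z : ℕ → Ω → ℝ}
    {X : Ω → ℝ} (hindep : iIndepFun Z P) (hident : ∀ ℓ, IdentDistrib (Z ℓ) X P P)
    (hX : MemLp X 2 P) (hnonneg : ∀ ℓ ω, 0 ≤ Z ℓ ω) {δ : ℝ} (hδ₀ : 0 ≤ δ) (hδ₁ : δ ≤ 1)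
    {N : ℕ} (hN : 1 ≤ N) :
    (N : ℝ)⁻¹ * ∫ ω, (⨆ k ∈ Icc 1 N, ∑ ℓ ∈ Icc k (k + ⌊δ * N⌋₊), Z ℓ ω) ∂P ≤
      2 * δ * P[X] + 2 * P[X] / N + (1 + 5 * Var[X; P]) / √N := by
  set m := ⌊δ * N⌋₊
  have hNpos : (0 : ℝ) < N := by exact_mod_cast hN
  have hsqrt : 0 < √(N : ℝ) := Real.sqrt_pos.mpr hNpos
  have hmean : 0 ≤ P[X] := (hident 0).integral_eq ▸ integral_nonneg (hnonneg 0)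
  have hvar : 0 ≤ Var[X; P] := variance_nonneg X P
  have hm : (m : ℝ) ≤ δ * N := Nat.floor_le (by positivity)
  have hmN : m ≤ N := by
    have : (m : ℝ) ≤ N := hm.trans (by nlinarith)
    exact_mod_cast this
  have hblocks : ((N / (m + 1) + 2 : ℕ) : ℝ) * (m + 1) ≤ 5 * N := by
    have := Nat.div_mul_le_self N (m + 1)
    have : (N / (m + 1) + 2) * (m + 1) ≤ 5 * N := by nlinarith
    exact_mod_cast this
  calc (N : ℝ)⁻¹ * ∫ ω, (⨆ k ∈ Icc 1 N, ∑ ℓ ∈ Icc k (k + m), Z ℓ ω) ∂P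
      ≤ (N : ℝ)⁻¹ * (2 * ((m + 1) * P[X]) + √N +
          (N / (m + 1) + 2 : ℕ) * (m + 1) * Var[X; P] / √N) := by
        gcongr
        exact integral_iSup_window_sum_le hindep hident hX hnonneg N m hsqrt
    _ ≤ (N : ℝ)⁻¹ * (2 * ((δ * N + 1) * P[X]) + √N + 5 * N * Var[X; P] / √N) := by
        gcongr
    _ = 2 * δ * P[X] + 2 * P[X] / N + (1 + 5 * Var[X; P]) / √N := by
        have hNs : √(N : ℝ) * √N = N := Real.mul_self_sqrt hNpos.le
        field_simp
        linear_combination hNs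

end Probability

lemma limsup_le_of_eventually_le_of_tendsto {α : Type*} {f : Filter α} [f.NeBot]
    {a b : α → ℝ} {l : ℝ} (ha : ∀ x, 0 ≤ a x) (hab : ∀ᶠ x in f, a x ≤ b x)
    (hb : Tendsto b f (nhds l)) : limsup a f ≤ l :=
  (limsup_le_limsup hab (isCoboundedUnder_le_of_le f ha) hb.isBoundedUnder_le).trans_eq
    hb.limsup_eq

lemma tendsto_add_div_natCast_add_div_sqrt (a b c : ℝ) :
    Tendsto (fun N : ℕ => a + b / N + c / √(N : ℝ)) atTop (nhds a) := by
  have hsqrt : Tendsto (fun N : ℕ => √(N : ℝ)) atTop atTop :=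
    Real.tendsto_sqrt_atTop.comp tendsto_natCast_atTop_atTop
  simpa using ((tendsto_const_nhds (x := a)).add (tendsto_const_div_atTop_nhds_zero_nat b)).add
    (tendsto_const_nhds.div_atTop hsqrt)

theorem regularity_for_iid_general {Ω : Type*} [MeasurableSpace Ω]
    (P : Measure Ω) [IsProbabilityMeasure P]
    (Z : ℕ → Ω → ℝ)
    (hindep : iIndepFun Z P)
    (hident : ∀ k, IdentDistrib (Z k) (Z 1) P P)
    (hnonneg : ∀ k ω, 0 ≤ Z k ω)
    (hmom : Integrable (fun ω => (Z 1 ω) ^ 2) P) :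
    ∃ C > 0, ∀ δ ∈ Set.Ioc (0 : ℝ) 1,
      Filter.limsup (fun N : ℕ =>
          (N : ℝ)⁻¹ * ∫ ω, (⨆ k ∈ Finset.Icc 1 N,
            ∑ ℓ ∈ Finset.Icc k (k + ⌊δ * (N : ℝ)⌋₊), Z ℓ ω) ∂P) Filter.atTop
        ≤ C * δ := by
  have hL2 : MemLp (Z 1) 2 P :=
    (memLp_two_iff_integrable_sq (hident 1).aemeasurable_fst.aestronglyMeasurable).mpr hmom
  have hmean : 0 ≤ P[Z 1] := integral_nonneg (hnonneg 1)
  refine ⟨2 * P[Z 1] + 1, by positivity, fun δ ⟨hδ₀, hδ₁⟩ => ?_⟩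
  calc _ ≤ 2 * δ * P[Z 1] := limsup_le_of_eventually_le_of_tendsto
          (fun N => mul_nonneg (by positivity)
            (integral_nonneg fun ω => iSup_window_sum_nonneg (hnonneg · ω) _ _))
          ((eventually_ge_atTop 1).mono fun N hN =>
            inv_mul_integral_iSup_window_sum_le hindep hident hL2 hnonneg hδ₀.le hδ₁ hN)
          (tendsto_add_div_natCast_add_div_sqrt _ _ _)
    _ ≤ (2 * P[Z 1] + 1) * δ := by nlinarith

/-- **Regularity for independent random variables.**
Let `{Z_k}_{k ≥ 1}` be an iid sequence of nonnegative real-valued random variables with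
`E[Z_1²] < ∞`.  Then there is a constant `C > 0` such that for every `δ ∈ (0,1]`,
`limsup_{N → ∞} (1/N) · E[ max_{1 ≤ k ≤ N} Σ_{ℓ=k}^{k+⌊δN⌋} Z_ℓ ] ≤ C · δ`. -/
theorem regularity_for_iid {Ω : Type*} [MeasurableSpace Ω]
    (P : Measure Ω) [IsProbabilityMeasure P]
    (Z : ℕ → Ω → ℝ)
    (hmeas : ∀ k, Measurable (Z k))
    (hindep : iIndepFun Z P)
    (hident : ∀ k, IdentDistrib (Z k) (Z 1) P P)
    (hnonneg : ∀ k ω, 0 ≤ Z k ω)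
    (hmom : Integrable (fun ω => (Z 1 ω) ^ 2) P) :
    ∃ C > 0, ∀ δ ∈ Set.Ioc (0 : ℝ) 1,
      Filter.limsup (fun N : ℕ =>
          (N : ℝ)⁻¹ * ∫ ω, (⨆ k ∈ Finset.Icc 1 N,
            ∑ ℓ ∈ Finset.Icc k (k + ⌊δ * (N : ℝ)⌋₊), Z ℓ ω) ∂P) Filter.atTop
        ≤ C * δ :=
  regularity_for_iid_general P Z hindep hident hnonneg hmom
end

section
/- Let N ≥ 1 and n ≥ 1 be integers and C₁, C₁′ > 0 constants. Suppose nonnegative reals c_ℓ^i (for 0 ≤ ℓ ≤ n, 1 ≤ i ≤ N) and y_ℓ ≥ 0 (for 0 ≤ ℓ < n) satisfy c_{ℓ+1}^i ≤ c_ℓ^i + (C₁/N)·y_ℓ + (C₁′/N²)·Σ_{j≤N} c_ℓ^j for all 0 ≤ ℓ < n and all i ≤ N. Then there exists a constant C₂ > 0, depending only on C₁, C₁′ and on any upper bound T for n/N, such that c_ℓ^i ≤ C₂·( c_0^i + (1/N)Σ_{j≤N} c_0^j + (1/N)Σ_{0≤ℓ′<n} y_{ℓ′} ) for all 0 ≤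 ℓ ≤ n and all i ≤ N. -/
/-!
Averaging the recursion over `i` gives `S_{ℓ+1} ≤ (1 + C₁'/N) S_ℓ + (C₁/N) y_ℓ` for the mean
`S_ℓ = N⁻¹ Σ_j c_ℓ^j`, so the scalar discrete Grönwall inequality bounds every `S_ℓ` by
`e^{C₁' n/N} (S_0 + C₁ Y)` with `Y = N⁻¹ Σ_ℓ y_ℓ`. Feeding this bound back into the recursion for a
single `c^i` and summing over `ℓ` gives the claim with `C₂ = (1 + C₁)(1 + C₁' T e^{C₁' T})`.
-/

open Finset

theorem discrete_gronwall_of_forall_lt {u b c : ℕ → ℝ} {n : ℕ} (hu₀ : 0 ≤ u 0)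
    (hu : ∀ k < n, u (k + 1) ≤ (1 + c k) * u k + b k) (hc : ∀ k < n, 0 ≤ c k)
    (hb : ∀ k < n, 0 ≤ b k) {ℓ : ℕ} (hℓ : ℓ ≤ n) :
    u ℓ ≤ (u 0 + ∑ k ∈ range ℓ, b k) * Real.exp (∑ k ∈ range ℓ, c k) := by
  -- Mathlib's `discrete_gronwall` needs the recursion at all times: freeze `u` after time `n`.
  have key := discrete_gronwall (u := fun k ↦ u (min k n)) (b := fun k ↦ if k < n then b k else 0)
    (c := fun k ↦ if k < n then c k else 0) (n₀ := 0) (by simpa using hu₀) ?_ ?_ ?_ (Nat.zero_le ℓ)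
  · have hsum (f : ℕ → ℝ) : ∑ k ∈ Ico 0 ℓ, (if k < n then f k else 0) = ∑ k ∈ range ℓ, f k := by
      rw [Nat.Ico_zero_eq_range]
      exact sum_congr rfl fun k hk ↦ if_pos ((mem_range.1 hk).trans_le hℓ)
    simpa only [hsum, min_eq_left hℓ, Nat.zero_min] using key
  · intro k _
    by_cases hk : k < n
    · simpa [hk, min_eq_left hk.le, min_eq_left (Nat.succ_le_of_lt hk)] using hu k hk
    · have : n ≤ k + 1 := by omega
      simp [hk, min_eq_right this, min_eq_right (not_lt.1 hk)]
  · intro k _; split_ifs with hk; exacts [hc k hk, le_rfl]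
  · intro k _; split_ifs with hk; exacts [hb k hk, le_rfl]

theorem inv_mul_sum_le_inv_mul_sum_add {N : ℕ} (hN : N ≠ 0) {f g : Fin N → ℝ} {β : ℝ}
    (h : ∀ i, f i ≤ g i + β) : (N : ℝ)⁻¹ * ∑ i, f i ≤ (N : ℝ)⁻¹ * ∑ i, g i + β := by
  calc (N : ℝ)⁻¹ * ∑ i, f i ≤ (N : ℝ)⁻¹ * ∑ i, (g i + β) := by gcongr with i; exact h i
    _ = (N : ℝ)⁻¹ * ∑ i, g i + β := by
      rw [sum_add_distrib, sum_const, card_univ, Fintype.card_fin, nsmul_eq_mul]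
      field_simp

namespace PerceptronSGD

section

variable {N n : ℕ} {C₁ C₁' : ℝ} {c : ℕ → Fin N → ℝ} {y : ℕ → ℝ}

theorem average_succ_le (hN : N ≠ 0) {ℓ : ℕ}
    (hrec : ∀ i, c (ℓ + 1) i ≤ c ℓ i + C₁ / N * y ℓ + C₁' / (N : ℝ) ^ 2 * ∑ j, c ℓ j) :
    (N : ℝ)⁻¹ * ∑ j, c (ℓ + 1) j ≤
      (1 + C₁' / N) * ((N : ℝ)⁻¹ * ∑ j, c ℓ j) + C₁ / N * y ℓ := by
  refine (inv_mul_sum_le_inv_mul_sum_add hN fun i ↦ (hrec i).trans_eq (add_assoc ..)).trans_eq ?_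
  field_simp
  ring

theorem average_le_mul_exp (hN : N ≠ 0) (hC₁ : 0 ≤ C₁) (hC₁' : 0 ≤ C₁')
    (hc₀ : ∀ i, 0 ≤ c 0 i) (hy : ∀ ℓ < n, 0 ≤ y ℓ)
    (hrec : ∀ ℓ < n, ∀ i, c (ℓ + 1) i ≤ c ℓ i + C₁ / N * y ℓ + C₁' / (N : ℝ) ^ 2 * ∑ j, c ℓ j)
    {ℓ : ℕ} (hℓ : ℓ ≤ n) :
    (N : ℝ)⁻¹ * ∑ j, c ℓ j ≤
      ((N : ℝ)⁻¹ * ∑ j, c 0 j + C₁ * ((N : ℝ)⁻¹ * ∑ k ∈ range n, y k)) *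
        Real.exp (C₁' * (n / N)) := by
  have hS₀ : 0 ≤ (N : ℝ)⁻¹ * ∑ j, c 0 j := mul_nonneg (by positivity) (sum_nonneg fun i _ ↦ hc₀ i)
  have hb : ∀ k < n, 0 ≤ C₁ / N * y k := fun k hk ↦ mul_nonneg (by positivity) (hy k hk)
  have hY : ∑ k ∈ range ℓ, C₁ / N * y k ≤ C₁ * ((N : ℝ)⁻¹ * ∑ k ∈ range n, y k) := by
    rw [← mul_sum, div_eq_mul_inv, mul_assoc]
    gcongr
    exact fun k hk _ ↦ hy k (mem_range.1 hk)
  calc (N : ℝ)⁻¹ * ∑ j, c ℓ j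
      ≤ ((N : ℝ)⁻¹ * ∑ j, c 0 j + ∑ k ∈ range ℓ, C₁ / N * y k) *
          Real.exp (∑ k ∈ range ℓ, C₁' / N) :=
        discrete_gronwall_of_forall_lt (u := fun k ↦ (N : ℝ)⁻¹ * ∑ j, c k j)
          hS₀ (fun k hk ↦ average_succ_le hN (hrec k hk))
          (fun _ _ ↦ by positivity) hb hℓ
    _ ≤ _ := by
      have hℓ' : (ℓ : ℝ) ≤ n := by exact_mod_cast hℓ
      rw [sum_const, card_range, nsmul_eq_mul, mul_div_left_comm]
      gcongr
      exact add_nonneg hS₀ ((sum_nonneg fun k hk ↦ hb k ((mem_range.1 hk).trans_le hℓ)).trans hY)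

theorem le_add_of_average_le (hC₁ : 0 ≤ C₁) (hC₁' : 0 ≤ C₁')
    (hc : ∀ ℓ ≤ n, ∀ i, 0 ≤ c ℓ i) (hy : ∀ ℓ < n, 0 ≤ y ℓ)
    (hrec : ∀ ℓ < n, ∀ i, c (ℓ + 1) i ≤ c ℓ i + C₁ / N * y ℓ + C₁' / (N : ℝ) ^ 2 * ∑ j, c ℓ j)
    {M : ℝ} (hM : ∀ ℓ < n, (N : ℝ)⁻¹ * ∑ j, c ℓ j ≤ M) {ℓ : ℕ} (hℓ : ℓ ≤ n) (i : Fin N) :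
    c ℓ i ≤ c 0 i + C₁ * ((N : ℝ)⁻¹ * ∑ k ∈ range n, y k) + C₁' * (n / N) * M := by
  set b : ℕ → ℝ := fun k ↦ C₁ / N * y k + C₁' / N * ((N : ℝ)⁻¹ * ∑ j, c k j)
  have hb : ∀ k < n, 0 ≤ b k := fun k hk ↦ add_nonneg (mul_nonneg (by positivity) (hy k hk))
    (mul_nonneg (by positivity) (mul_nonneg (by positivity) (sum_nonneg fun j _ ↦ hc k hk.le j)))
  calc c ℓ i
      ≤ (c 0 i + ∑ k ∈ range ℓ, b k) * Real.exp (∑ k ∈ range ℓ, (0 : ℝ)) :=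
        discrete_gronwall_of_forall_lt (u := fun k ↦ c k i) (c := 0) (hc 0 n.zero_le i)
          (fun k hk ↦ (hrec k hk i).trans_eq (by simp only [b, Pi.zero_apply]; ring))
          (fun _ _ ↦ le_rfl) hb hℓ
    _ = c 0 i + ∑ k ∈ range ℓ, b k := by simp
    _ ≤ c 0 i + ∑ k ∈ range n, b k := by
        gcongr
        exact fun k hk _ ↦ hb k (mem_range.1 hk)
    _ ≤ c 0 i + ∑ k ∈ range n, (C₁ / N * y k + C₁' / N * M) := by
        gcongr with k hk
        simp only [b]
        gcongr
        exact hM k (mem_range.1 hk)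
    _ = c 0 i + C₁ * ((N : ℝ)⁻¹ * ∑ k ∈ range n, y k) + C₁' * (n / N) * M := by
        rw [sum_add_distrib, ← mul_sum, sum_const, card_range, nsmul_eq_mul]
        ring

end

/-- **Discrete Grönwall-type estimate.**
Suppose nonnegative reals `c_ℓ^i` (for `0 ≤ ℓ ≤ n`, `1 ≤ i ≤ N`) and `y_ℓ ≥ 0` satisfy
`c_{ℓ+1}^i ≤ c_ℓ^i + (C₁/N)·y_ℓ + (C₁'/N²)·Σ_j c_ℓ^j` for all `0 ≤ ℓ < n` and `i ≤ N`.
Then there is a constant `C₂ > 0`, depending only on `C₁, C₁'` and an upper bound `T` for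
`n/N`, such that `c_ℓ^i ≤ C₂·( c_0^i + (1/N)Σ_j c_0^j + (1/N)Σ_{ℓ' < n} y_{ℓ'} )`
for all `0 ≤ ℓ ≤ n` and `i ≤ N`. -/
theorem discrete_gronwall (C₁ C₁' T : ℝ) (hC₁ : 0 < C₁) (hC₁' : 0 < C₁') (hT : 0 < T) :
    ∃ C₂ > (0 : ℝ),
      ∀ (N n : ℕ), 1 ≤ N → 1 ≤ n → (n : ℝ) / N ≤ T →
      ∀ (c : ℕ → Fin N → ℝ) (y : ℕ → ℝ),
        (∀ ℓ ≤ n, ∀ i, 0 ≤ c ℓ i) →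
        (∀ ℓ < n, 0 ≤ y ℓ) →
        (∀ ℓ < n, ∀ i, c (ℓ + 1) i ≤ c ℓ i + C₁ / N * y ℓ + C₁' / (N : ℝ) ^ 2 * ∑ j, c ℓ j) →
        ∀ ℓ ≤ n, ∀ i, c ℓ i ≤
          C₂ * (c 0 i + (N : ℝ)⁻¹ * ∑ j, c 0 j + (N : ℝ)⁻¹ * ∑ ℓ' ∈ Finset.range n, y ℓ') := by
  have hK : 0 ≤ C₁' * T * Real.exp (C₁' * T) := by positivity
  refine ⟨(1 + C₁) * (1 + C₁' * T * Real.exp (C₁' * T)), by positivity, ?_⟩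
  intro N n hN _ hnT c y hc hy hrec ℓ hℓ i
  set S₀ := (N : ℝ)⁻¹ * ∑ j, c 0 j
  set Y := (N : ℝ)⁻¹ * ∑ k ∈ range n, y k
  have hc₀ : 0 ≤ c 0 i := hc 0 n.zero_le i
  have hS₀ : 0 ≤ S₀ := mul_nonneg (by positivity) (sum_nonneg fun j _ ↦ hc 0 n.zero_le j)
  have hY : 0 ≤ Y := mul_nonneg (by positivity) (sum_nonneg fun k hk ↦ hy k (mem_range.1 hk))
  have hS : ∀ k < n, (N : ℝ)⁻¹ * ∑ j, c k j ≤ (S₀ + C₁ * Y) * Real.exp (C₁' * T) := fun k hk ↦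
    (average_le_mul_exp (by omega) hC₁.le hC₁'.le (hc 0 n.zero_le) hy hrec hk.le).trans
      (by gcongr)
  calc c ℓ i
      ≤ c 0 i + C₁ * Y + C₁' * (n / N) * ((S₀ + C₁ * Y) * Real.exp (C₁' * T)) :=
        le_add_of_average_le hC₁.le hC₁'.le hc hy hrec hS hℓ i
    _ ≤ c 0 i + C₁ * Y + C₁' * T * ((S₀ + C₁ * Y) * Real.exp (C₁' * T)) := by gcongr
    _ ≤ (1 + C₁' * T * Real.exp (C₁' * T)) * (c 0 i + S₀ + C₁ * Y) := by
        nlinarith [mul_nonneg hK hc₀]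
    _ ≤ (1 + C₁' * T * Real.exp (C₁' * T)) * ((1 + C₁) * (c 0 i + S₀ + Y)) := by
        gcongr
        nlinarith [mul_nonneg hC₁.le hc₀, mul_nonneg hC₁.le hS₀]
    _ = (1 + C₁) * (1 + C₁' * T * Real.exp (C₁' * T)) * (c 0 i + S₀ + Y) := by ring
end PerceptronSGD
end

section
/- Fix T ≥ 1. There exists a constant C₃ > 0, depending only on α, the supremum norm of σ and T, such that almost surely, for every 0 ≤ ℓ ≤ ⌊NT⌋, ⟨(B_{ℓ,c}^N(·))², ν_ℓ^N⟩ = (1/N)Σ_{i≤N} (B_{ℓ,c}^N(θ_ℓ^i))² ≤ C₃·( Y_ℓ² + Ȳ_N² + C̄_N² ), where Ȳ_N = (1/N)Σ_{0≤ℓ′<⌊NT⌋}|Y_{ℓ′}| and C̄_N² = (1/N)Σ_{j≤N}(c_0^j)². -/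
/-!
The first moment `A_k = ⟨|c|, ν_k^N⟩` of the output weights controls everything: since `σ` is
bounded by `K`, the network output is at most `K A_k`, so `|B_{k,c}^N| ≤ |α| K (|Y_k| + K A_k)`
and one SGD step gives `A_{k+1} ≤ (1 + |α| K² / N) A_k + |α| K |Y_k| / N`. The discrete Grönwall
inequality bounds `A_ℓ` for `ℓ ≤ NT` by `e^{|α| K² T} (A_0 + |α| K Ȳ_N)`, and `A_0² ≤ C̄_N²` by
Cauchy–Schwarz.
-/

open MeasureTheory ProbabilityTheory Filter Finset

noncomputable section

/-- Output `g(x, θ)` of the single-layer perceptron with `N` hidden neurons. -/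
def net {d N : ℕ} (σ : ℝ → ℝ) (x : Fin d → ℝ) (cv : Fin N → ℝ) (wv : Fin N → Fin d → ℝ) : ℝ :=
  (N : ℝ)⁻¹ * ∑ i, cv i * σ (∑ m, x m * wv i m)

/-- The SGD recursion with learning rate `α / N`, activation `σ`, pruning sets `ξ`,
training data `(X_k, Y_k)` and iterates `(c_k^i, w_k^i)`. -/
def IsSGD {Ω : Type} {d N : ℕ} (α : ℝ) (σ : ℝ → ℝ) (ξ : Fin N → Fin d → Bool)
    (X : ℕ → Ω → Fin d → ℝ) (Y : ℕ → Ω → ℝ)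
    (c : ℕ → Fin N → Ω → ℝ) (w : ℕ → Fin N → Ω → Fin d → ℝ) : Prop :=
  ∀ k i ω,
    c (k + 1) i ω = c k i ω + (N : ℝ)⁻¹ *
        (α * (Y k ω - net σ (X k ω) (fun j => c k j ω) (fun j => w k j ω)) *
          σ (∑ m, X k ω m * w k i ω m)) ∧
    ∀ m, w (k + 1) i ω m = w k i ω m + (N : ℝ)⁻¹ *
        (α * (Y k ω - net σ (X k ω) (fun j => c k j ω) (fun j => w k j ω)) * c k i ω *
          deriv σ (∑ m', X k ω m' * w k i ω m') * (if ξ i m then X k ω m else 0))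

/-- The training data `{(X_k, Y_k)}_{k ≥ 0}` is an iid sequence. -/
def DataIID {Ω : Type} [MeasurableSpace Ω] {d : ℕ} (P : Measure Ω)
    (X : ℕ → Ω → Fin d → ℝ) (Y : ℕ → Ω → ℝ) : Prop :=
  (∀ k, Measurable fun ω => (X k ω, Y k ω)) ∧
  iIndepFun (fun k ω => (X k ω, Y k ω)) P ∧
  ∀ k, IdentDistrib (fun ω => (X k ω, Y k ω)) (fun ω => (X 0 ω, Y 0 ω)) P P

/-- `⟨|c|, ν^N⟩` when `v` lists the output weights `c^i`. -/
def meanAbs {N : ℕ} (v : Fin N → ℝ) : ℝ :=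
  (N : ℝ)⁻¹ * ∑ i, |v i|

/-- The paper's `B_{k,c}^N(θ_k^i)`, evaluated at the `k`-th sample `(x, y)`. -/
def driftC {d N : ℕ} (α : ℝ) (σ : ℝ → ℝ) (x : Fin d → ℝ) (y : ℝ) (cv : Fin N → ℝ)
    (wv : Fin N → Fin d → ℝ) (i : Fin N) : ℝ :=
  α * (y - net σ x cv wv) * σ (∑ m, x m * wv i m)

section Deterministic

variable {d N : ℕ} {α Kσ : ℝ} {σ : ℝ → ℝ}

lemma inv_mul_sum_le_of_forall_le (hN : N ≠ 0) {f : Fin N → ℝ} {B : ℝ} (h : ∀ i, f i ≤ B) :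
    (N : ℝ)⁻¹ * ∑ i, f i ≤ B :=
  calc (N : ℝ)⁻¹ * ∑ i, f i ≤ (N : ℝ)⁻¹ * ∑ _i : Fin N, B := by gcongr with i; exact h i
    _ = B := by simp [hN]

lemma meanAbs_nonneg (v : Fin N → ℝ) : 0 ≤ meanAbs v := by
  unfold meanAbs; positivity

lemma meanAbs_sq_le (v : Fin N → ℝ) : meanAbs v ^ 2 ≤ (N : ℝ)⁻¹ * ∑ i, v i ^ 2 := by
  simpa [meanAbs, div_eq_inv_mul, sq_abs] using
    sum_div_card_sq_le_sum_sq_div_card (s := univ) (f := fun i : Fin N => |v i|)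

lemma meanAbs_le_add_of_abs_sub_le (hN : N ≠ 0) {v v' : Fin N → ℝ} {b : ℝ}
    (h : ∀ i, |v' i - v i| ≤ b) : meanAbs v' ≤ meanAbs v + b := by
  have : meanAbs v' - meanAbs v = (N : ℝ)⁻¹ * ∑ i, (|v' i| - |v i|) := by
    simp only [meanAbs, sum_sub_distrib, mul_sub]
  have := inv_mul_sum_le_of_forall_le hN fun i => (abs_sub_abs_le_abs_sub _ _).trans (h i)
  linarith

lemma abs_net_le (hσ : ∀ s, |σ s| ≤ Kσ) (x : Fin d → ℝ) (cv : Fin N → ℝ)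
    (wv : Fin N → Fin d → ℝ) : |net σ x cv wv| ≤ Kσ * meanAbs cv := by
  have hsum : |∑ i, cv i * σ (∑ m, x m * wv i m)| ≤ ∑ i, |cv i| * Kσ :=
    (abs_sum_le_sum_abs _ _).trans <| sum_le_sum fun i _ => by
      rw [abs_mul]; exact mul_le_mul_of_nonneg_left (hσ _) (abs_nonneg _)
  calc |net σ x cv wv| = (N : ℝ)⁻¹ * |∑ i, cv i * σ (∑ m, x m * wv i m)| := by
        simp only [net, abs_mul, abs_inv, Nat.abs_cast]
    _ ≤ (N : ℝ)⁻¹ * ∑ i, |cv i| * Kσ := by gcongr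
    _ = Kσ * meanAbs cv := by rw [meanAbs, ← sum_mul]; ring

lemma abs_driftC_le (hσ : ∀ s, |σ s| ≤ Kσ) (x : Fin d → ℝ) (y : ℝ) (cv : Fin N → ℝ)
    (wv : Fin N → Fin d → ℝ) (i : Fin N) :
    |driftC α σ x y cv wv i| ≤ |α| * Kσ * (|y| + Kσ * meanAbs cv) := by
  have hKσ : 0 ≤ Kσ := (abs_nonneg _).trans (hσ 0)
  have herr : |y - net σ x cv wv| ≤ |y| + Kσ * meanAbs cv :=
    (abs_sub _ _).trans (add_le_add_right (abs_net_le hσ x cv wv) _)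
  rw [driftC, abs_mul, abs_mul, mul_right_comm]
  have := meanAbs_nonneg cv
  gcongr
  exact hσ _

lemma inv_mul_sum_driftC_sq_le (hN : N ≠ 0) (hσ : ∀ s, |σ s| ≤ Kσ) (x : Fin d → ℝ) (y : ℝ)
    (cv : Fin N → ℝ) (wv : Fin N → Fin d → ℝ) :
    (N : ℝ)⁻¹ * ∑ i, driftC α σ x y cv wv i ^ 2 ≤ (|α| * Kσ * (|y| + Kσ * meanAbs cv)) ^ 2 :=
  inv_mul_sum_le_of_forall_le hN fun i =>
    sq_le_sq.2 ((abs_driftC_le hσ x y cv wv i).trans (le_abs_self _))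

variable {x : ℕ → Fin d → ℝ} {y : ℕ → ℝ} {c : ℕ → Fin N → ℝ} {w : ℕ → Fin N → Fin d → ℝ}

lemma meanAbs_le_of_sgd (hN : N ≠ 0) (hσ : ∀ s, |σ s| ≤ Kσ)
    (hc : ∀ k i, c (k + 1) i = c k i + (N : ℝ)⁻¹ * driftC α σ (x k) (y k) (c k) (w k) i)
    (n : ℕ) :
    meanAbs (c n) ≤ (meanAbs (c 0) + |α| * Kσ * ((N : ℝ)⁻¹ * ∑ k ∈ range n, |y k|)) *
      Real.exp (|α| * Kσ ^ 2 * (n / N)) := by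
  have hKσ : 0 ≤ Kσ := (abs_nonneg _).trans (hσ 0)
  have hstep : ∀ k, meanAbs (c (k + 1)) ≤
      (1 + (N : ℝ)⁻¹ * (|α| * Kσ ^ 2)) * meanAbs (c k) + (N : ℝ)⁻¹ * (|α| * Kσ) * |y k| := by
    intro k
    have := meanAbs_le_add_of_abs_sub_le hN (v := c k) (v' := c (k + 1)) fun i => by
      rw [hc k i, add_sub_cancel_left, abs_mul, abs_inv, Nat.abs_cast]
      exact mul_le_mul_of_nonneg_left (abs_driftC_le hσ _ _ _ _ i) (by positivity)
    linarith
  have := discrete_gronwall (u := fun k => meanAbs (c k))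
    (c := fun _ => (N : ℝ)⁻¹ * (|α| * Kσ ^ 2)) (b := fun k => (N : ℝ)⁻¹ * (|α| * Kσ) * |y k|)
    (meanAbs_nonneg (c 0)) (fun k _ => hstep k)
    (fun _ _ => by positivity) (fun _ _ => by positivity) (Nat.zero_le n)
  convert this using 2
  · rw [← range_eq_Ico, ← mul_sum]; ring
  · rw [sum_const, Nat.card_Ico, Nat.sub_zero, nsmul_eq_mul]; congr 1; ring

lemma inv_mul_sum_driftC_sq_le_of_sgd (hN : N ≠ 0) (hσ : ∀ s, |σ s| ≤ Kσ)
    (hc : ∀ k i, c (k + 1) i = c k i + (N : ℝ)⁻¹ * driftC α σ (x k) (y k) (c k) (w k) i)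
    {T : ℝ} {n L : ℕ} (hnL : n ≤ L) (hL : (L : ℝ) ≤ N * T) :
    (N : ℝ)⁻¹ * ∑ i, driftC α σ (x n) (y n) (c n) (w n) i ^ 2 ≤
      3 * (α * Kσ * (1 + Kσ * Real.exp (|α| * Kσ ^ 2 * T) +
          |α| * Kσ ^ 2 * Real.exp (|α| * Kσ ^ 2 * T))) ^ 2 *
        (y n ^ 2 + ((N : ℝ)⁻¹ * ∑ k ∈ range L, |y k|) ^ 2 + (N : ℝ)⁻¹ * ∑ j, c 0 j ^ 2) := by
  set E := Real.exp (|α| * Kσ ^ 2 * T)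
  set S := (N : ℝ)⁻¹ * ∑ k ∈ range L, |y k|
  set A₀ := meanAbs (c 0)
  have hKσ : 0 ≤ Kσ := (abs_nonneg _).trans (hσ 0)
  have hS : 0 ≤ S := by positivity
  have hA₀ := meanAbs_nonneg (c 0)
  have hAn := meanAbs_nonneg (c n)
  have hgrowth : meanAbs (c n) ≤ (A₀ + |α| * Kσ * S) * E := by
    refine (meanAbs_le_of_sgd hN hσ hc n).trans ?_
    have hnN : (n : ℝ) / N ≤ T := by
      rw [div_le_iff₀ (by positivity)]
      linarith [(Nat.cast_le (α := ℝ)).2 hnL]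
    gcongr
    · refine mul_le_mul_of_nonneg_left ?_ (by positivity)
      exact sum_le_sum_of_subset_of_nonneg (range_subset_range.2 hnL)
        fun k _ _ => abs_nonneg (y k)
    · exact Real.exp_le_exp.2 (by gcongr)
  set K := 1 + Kσ * E + |α| * Kσ ^ 2 * E
  have hlin : |y n| + Kσ * meanAbs (c n) ≤ K * (|y n| + A₀ + S) := by
    have := mul_le_mul_of_nonneg_left hgrowth hKσ
    have : 0 ≤ Kσ * E := by positivity
    have : 0 ≤ |α| * Kσ ^ 2 * E := by positivity
    nlinarith [abs_nonneg (y n)]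
  calc (N : ℝ)⁻¹ * ∑ i, driftC α σ (x n) (y n) (c n) (w n) i ^ 2
      ≤ (|α| * Kσ * (|y n| + Kσ * meanAbs (c n))) ^ 2 := inv_mul_sum_driftC_sq_le hN hσ _ _ _ _
    _ ≤ (|α| * Kσ * (K * (|y n| + A₀ + S))) ^ 2 := by gcongr
    _ = (α * Kσ * K) ^ 2 * (|y n| + A₀ + S) ^ 2 := by simp only [mul_pow, sq_abs]; ring
    _ ≤ (α * Kσ * K) ^ 2 * (3 * (y n ^ 2 + S ^ 2 + A₀ ^ 2)) := by
      gcongr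
      nlinarith [sq_abs (y n), sq_nonneg (|y n| - A₀), sq_nonneg (|y n| - S), sq_nonneg (A₀ - S)]
    _ ≤ 3 * (α * Kσ * K) ^ 2 * (y n ^ 2 + S ^ 2 + (N : ℝ)⁻¹ * ∑ j, c 0 j ^ 2) := by
      rw [← mul_assoc, mul_comm _ (3 : ℝ)]
      gcongr
      exact meanAbs_sq_le (c 0)

end Deterministic

theorem Bc_squared_bound_general (α Kσ T : ℝ) (hT : 1 ≤ T) :
    ∃ C₃ > (0 : ℝ),
      ∀ (d N : ℕ), 1 ≤ d → 1 ≤ N →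
      ∀ σ : ℝ → ℝ, ContDiff ℝ 2 σ → (∀ s, |σ s| ≤ Kσ) →
        (∃ K', ∀ s, |deriv σ s| ≤ K' ∧ |deriv (deriv σ) s| ≤ K') →
      ∀ (𝒞 : Finset (Fin d → Bool)) (ξ : Fin N → Fin d → Bool), (∀ i, ξ i ∈ 𝒞) →
      ∀ (Ω : Type) (_ : MeasurableSpace Ω) (P : Measure Ω), IsProbabilityMeasure P →
      ∀ (X : ℕ → Ω → Fin d → ℝ) (Y : ℕ → Ω → ℝ)
        (c : ℕ → Fin N → Ω → ℝ) (w : ℕ → Fin N → Ω → Fin d → ℝ),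
        DataIID P X Y →
        Measurable (fun ω => fun i : Fin N => (c 0 i ω, w 0 i ω)) →
        IndepFun (fun ω => fun i : Fin N => (c 0 i ω, w 0 i ω))
          (fun ω => fun k : ℕ => (X k ω, Y k ω)) P →
        IsSGD α σ ξ X Y c w →
        ∀ᵐ ω ∂P, ∀ ℓ ≤ ⌊(N : ℝ) * T⌋₊,
          (N : ℝ)⁻¹ * ∑ i,
              (α * (Y ℓ ω - net σ (X ℓ ω) (fun j => c ℓ j ω) (fun j => w ℓ j ω)) *
                σ (∑ m, X ℓ ω m * w ℓ i ω m)) ^ 2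
            ≤ C₃ * ((Y ℓ ω) ^ 2
                + ((N : ℝ)⁻¹ * ∑ ℓ' ∈ Finset.range ⌊(N : ℝ) * T⌋₊, |Y ℓ' ω|) ^ 2
                + (N : ℝ)⁻¹ * ∑ j, (c 0 j ω) ^ 2) := by
  set E := Real.exp (|α| * Kσ ^ 2 * T)
  refine ⟨3 * (α * Kσ * (1 + Kσ * E + |α| * Kσ ^ 2 * E)) ^ 2 + 1, by positivity, ?_⟩
  intro d N _ hN σ _ hσ _ 𝒞 ξ _ Ω _ P _ X Y c w _ _ _ hsgd
  refine ae_of_all P fun ω ℓ hℓ => ?_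
  have hL : (⌊(N : ℝ) * T⌋₊ : ℝ) ≤ N * T :=
    Nat.floor_le (mul_nonneg (Nat.cast_nonneg N) (by linarith))
  refine (inv_mul_sum_driftC_sq_le_of_sgd (x := fun k => X k ω) (y := fun k => Y k ω)
    (c := fun k j => c k j ω) (w := fun k j => w k j ω) (by omega) hσ
    (fun k i => (hsgd k i ω).1) hℓ hL).trans ?_
  gcongr
  linarith

/-- Fix `T ≥ 1`.  There exists a constant `C₃ > 0`, depending only on `α`, the supremum norm
of `σ` and `T`, such that almost surely, for every `0 ≤ ℓ ≤ ⌊NT⌋`,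
`⟨(B_{ℓ,c}^N(·))², ν_ℓ^N⟩ = (1/N)Σ_i (B_{ℓ,c}^N(θ_ℓ^i))² ≤ C₃·(Y_ℓ² + Ȳ_N² + C̄_N²)`,
where `Ȳ_N = (1/N)Σ_{ℓ' < ⌊NT⌋}|Y_{ℓ'}|` and `C̄_N² = (1/N)Σ_j (c_0^j)²`. -/
theorem Bc_squared_bound (α Kσ T : ℝ) (hα : 0 < α) (hT : 1 ≤ T) :
    ∃ C₃ > (0 : ℝ),
      ∀ (d N : ℕ), 1 ≤ d → 1 ≤ N →
      ∀ σ : ℝ → ℝ, ContDiff ℝ 2 σ → (∀ s, |σ s| ≤ Kσ) →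
        (∃ K', ∀ s, |deriv σ s| ≤ K' ∧ |deriv (deriv σ) s| ≤ K') →
      ∀ (𝒞 : Finset (Fin d → Bool)) (ξ : Fin N → Fin d → Bool), (∀ i, ξ i ∈ 𝒞) →
      ∀ (Ω : Type) (_ : MeasurableSpace Ω) (P : Measure Ω), IsProbabilityMeasure P →
      ∀ (X : ℕ → Ω → Fin d → ℝ) (Y : ℕ → Ω → ℝ)
        (c : ℕ → Fin N → Ω → ℝ) (w : ℕ → Fin N → Ω → Fin d → ℝ),
        DataIID P X Y →
        Measurable (fun ω => fun i : Fin N => (c 0 i ω, w 0 i ω)) →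
        IndepFun (fun ω => fun i : Fin N => (c 0 i ω, w 0 i ω))
          (fun ω => fun k : ℕ => (X k ω, Y k ω)) P →
        IsSGD α σ ξ X Y c w →
        ∀ᵐ ω ∂P, ∀ ℓ ≤ ⌊(N : ℝ) * T⌋₊,
          (N : ℝ)⁻¹ * ∑ i,
              (α * (Y ℓ ω - net σ (X ℓ ω) (fun j => c ℓ j ω) (fun j => w ℓ j ω)) *
                σ (∑ m, X ℓ ω m * w ℓ i ω m)) ^ 2
            ≤ C₃ * ((Y ℓ ω) ^ 2
                + ((N : ℝ)⁻¹ * ∑ ℓ' ∈ Finset.range ⌊(N : ℝ) * T⌋₊, |Y ℓ' ω|) ^ 2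
                + (N : ℝ)⁻¹ * ∑ j, (c 0 j ω) ^ 2) :=
  Bc_squared_bound_general α Kσ T hT

end
end
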